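/- arXiv:1710.04978 — 5 statements merged into one kernel-verified Lean document; each statement's English description precedes it below -/
import Mathlib

section
/- A permutation π of [n] satisfies P(π) = identity if and only if π is a layered permutation, i.e., a direct sum of decreasing permutations: there exist indices 0 = i_0 < i_1 < … < i_m = n such that on each interval of positions (i_{t-1}, i_t] the values of π are exactly the integers i_{t-1}+1, …, i_t arranged in decreasing order. -/
/-- The identity permutation of `[n] = {1,…,n}` in one-line notation. -/
def idList (n : ℕ) : List ℕ := (List.range n).map (· + 1)

/-- `l` is (the one-line notation of) a permutation of `[n] = {1,…,n}`. -/
def IsPermOf (l : List ℕ) (n : ℕ) : Prop := l.Perm (idList n)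

/-- One pass of the pop-stack machine: `stack` holds the current content of the
stack (top first); a pop empties the whole stack onto the output. -/
def popAux : List ℕ → List ℕ → List ℕ
  | stack, [] => stack
  | stack, x :: xs =>
    match stack with
    | [] => popAux [x] xs
    | a :: _ => if x < a then popAux (x :: stack) xs else stack ++ popAux [x] xs

/-- The pop-stack sorting operator `P`, acting on one-line notations. -/
def popPass (l : List ℕ) : List ℕ := popAux [] l

/-- An operation sequence for permutations of `[n]`: a word of length `n+1` over
`{a, d}` (here `true` = `a`, `false` = `d`) beginning and ending with `a`. -/
def OpSeq (μ : List Bool) (n : ℕ) : Prop :=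
  μ.length = n + 1 ∧ μ.head? = some true ∧ μ.getLast? = some true

/-- Helper for blockwise reversal: `cur` is the current block, already reversed;
the `i`-th letter of the operation sequence precedes the `i`-th entry of the
permutation, and a letter `a = true` flushes the current block and starts a new one. -/
def revAux : List ℕ → List ℕ → List Bool → List ℕ
  | cur, [], _ => cur
  | cur, x :: xs, [] => revAux (x :: cur) xs []
  | cur, x :: xs, c :: cs =>
    if c then cur ++ revAux [x] xs cs else revAux (x :: cur) xs cs

/-- Blockwise reversal `rev(l, μ)` of `l` according to the operation sequence `μ`. -/
def rev (l : List ℕ) (μ : List Bool) : List ℕ := revAux [] l μ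

/-- Tail of the ascent/descent word of a list (letters `c_2 … c_{n+1}`). -/
def ascTail : List ℕ → List Bool
  | [] => []
  | [_] => [true]
  | x :: y :: rest => decide (x < y) :: ascTail (y :: rest)

/-- The ascent/descent word `w(π) = c_1 c_2 … c_{n+1}` of `π` (with `true` = `a`). -/
def ascWord (l : List ℕ) : List Bool := true :: ascTail l

/-- `L` is the decomposition of `π` into its maximal decreasing runs:
the blocks concatenate to `π`, each block is nonempty and strictly decreasing,
and at each boundary between consecutive blocks there is an ascent (maximality). -/
def RunDecomp (π : List ℕ) (L : List (List ℕ)) : Prop :=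
  π = L.flatten ∧ (∀ b ∈ L, b ≠ []) ∧ (∀ b ∈ L, b.Chain' (· > ·)) ∧
    L.Chain' (fun b c => ∀ x ∈ b.getLast?, ∀ y ∈ c.head?, x < y)

/-- The one-line notation of a permutation of `Fin n`, with values shifted to `{1,…,n}`. -/
def permToList {n : ℕ} (σ : Equiv.Perm (Fin n)) : List ℕ :=
  List.ofFn fun i => (σ i : ℕ) + 1

/-- The number of permutations of `[n]` sortable by `k` passes through a pop-stack. -/
def countSortable (k n : ℕ) : ℕ :=
  (Finset.univ.filter (fun σ : Equiv.Perm (Fin n) => popPass^[k] (permToList σ) = idList n)).card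

/-- A semitrace of order `k` and length `n`: permutations `α 1, …, α (k+1)` of `[n]`
with `α (k+1)` the identity, and operation sequences `μ 1, …, μ k`, such that
`α (i+1)` is the blockwise reversal of `α i` according to `μ i`. -/
def IsSemitrace (n k : ℕ) (α : ℕ → List ℕ) (μ : ℕ → List Bool) : Prop :=
  (∀ i, 1 ≤ i → i ≤ k + 1 → IsPermOf (α i) n) ∧
  (∀ i, 1 ≤ i → i ≤ k → OpSeq (μ i) n) ∧
  α (k + 1) = idList n ∧
  (∀ i, 1 ≤ i → i ≤ k → α (i + 1) = rev (α i) (μ i))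

/-- `a` and `b` lie in the same block of `σ` with respect to the operation sequence `μ`:
they occupy positions `p ≤ q` with no bar (letter `a = true`) strictly between them. -/
def SameBlock (σ : List ℕ) (μ : List Bool) (a b : ℕ) : Prop :=
  ∃ p q : ℕ, p ≤ q ∧ q < σ.length ∧
    ((σ.getD p 0 = a ∧ σ.getD q 0 = b) ∨ (σ.getD p 0 = b ∧ σ.getD q 0 = a)) ∧
    ∀ r, p < r → r ≤ q → μ.getD r false = false

/-- The number of descents of a list. -/
def descentCount (l : List ℕ) : ℕ :=
  ((List.range (l.length - 1)).filter (fun i => l.getD (i + 1) 0 < l.getD i 0)).length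

/-- The layered permutation with the given block sizes, starting with value `start + 1`:
each block consists of consecutive values arranged in decreasing order. -/
def layeredList : ℕ → List ℕ → List ℕ
  | _, [] => []
  | start, s :: rest =>
      ((List.range s).map (fun j => start + s - j)) ++ layeredList (start + s) rest

/-!
`P` reverses each maximal decreasing run of `π`, so `P(π)` is the concatenation of the reversed
runs. This is the identity exactly when the first run, reversed, is `1, …, k` and the remaining
runs, reversed, continue with `k + 1, …`, i.e. when the runs are the blocks of a layered
permutation. Conversely, the blocks of a layered permutation are decreasing and meet at ascents,
so they are its maximal decreasing runs.
-/

open List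

def decreasingRuns (l : List ℕ) : List (List ℕ) := l.splitBy fun a b => b < a

theorem idList_eq_range' (n : ℕ) : idList n = range' 1 n := by
  simp [idList, range'_eq_map_range, Nat.add_comm]

theorem layeredList_cons (start s : ℕ) (sizes : List ℕ) :
    layeredList start (s :: sizes) =
      (range' (start + 1) s).reverse ++ layeredList (start + s) sizes := by
  rw [layeredList, reverse_range']
  congr 1
  exact map_congr_left fun j _ => by omega

theorem lt_of_mem_layeredList {start y : ℕ} {sizes : List ℕ}
    (hy : y ∈ layeredList start sizes) : start < y := by
  induction sizes generalizing start with
  | nil => simp [layeredList] at hy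
  | cons s sizes ih =>
    rw [layeredList_cons, mem_append, mem_reverse, mem_range'_1] at hy
    rcases hy with hy | hy
    · omega
    · have := ih hy
      omega

theorem popAux_cons_append {x : ℕ} {r : List ℕ} (stack rest : List ℕ)
    (hr : (x :: r).IsChain (· > ·))
    (hrest : ∀ y ∈ rest.head?, ¬ y < (x :: r).getLast (cons_ne_nil x r)) :
    popAux (x :: stack) (r ++ rest) = (x :: r).reverse ++ stack ++ popPass rest := by
  induction r generalizing x stack with
  | nil =>
    cases rest with
    | nil => simp [popAux, popPass]
    | cons y ys => simp [popAux, popPass, show ¬ y < x by simpa using hrest]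
  | cons z r ih =>
    rw [isChain_cons_cons] at hr
    rw [cons_append, popAux, if_pos hr.1, ih _ hr.2 (by simpa using hrest)]
    simp

theorem popPass_append_of_isChain {b : List ℕ} (rest : List ℕ) (hb : b ≠ [])
    (hdec : b.IsChain (· > ·)) (hrest : ∀ y ∈ rest.head?, ¬ y < b.getLast hb) :
    popPass (b ++ rest) = b.reverse ++ popPass rest := by
  obtain ⟨x, r, rfl⟩ := exists_cons_of_ne_nil hb
  change popAux [x] (r ++ rest) = _
  simpa using popAux_cons_append [] rest hdec hrest

theorem popPass_flatten {L : List (List ℕ)} (hne : [] ∉ L)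
    (hdec : ∀ b ∈ L, b.IsChain (· > ·))
    (hjoin : L.IsChain fun a b => ∃ ha hb, ¬ b.head hb < a.getLast ha) :
    popPass L.flatten = L.flatMap reverse := by
  induction L with
  | nil => rfl
  | cons b L ih =>
    have hb : b ≠ [] := fun h => hne (h ▸ mem_cons_self)
    rw [flatten_cons, flatMap_cons, popPass_append_of_isChain _ hb (hdec b mem_cons_self),
      ih (fun h => hne (mem_cons_of_mem _ h)) (fun c hc => hdec c (mem_cons_of_mem _ hc))
        hjoin.tail]
    intro y hy
    cases L with
    | nil => simp at hy
    | cons c L =>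
      obtain ⟨_, hc, hcb⟩ := (isChain_cons_cons.mp hjoin).1
      rw [flatten_cons, head?_append, head?_eq_some_head hc] at hy
      cases hy
      exact hcb

theorem popPass_eq_flatMap_reverse (l : List ℕ) :
    popPass l = (decreasingRuns l).flatMap reverse := by
  obtain ⟨hl, hne, hdec, hjoin⟩ := splitBy_eq_iff.mp (rfl : decreasingRuns l = _)
  conv_lhs => rw [hl]
  exact popPass_flatten hne (fun b hb => (hdec b hb).imp fun _ _ h => of_decide_eq_true h)
    (hjoin.imp fun _ _ ⟨ha, hb, h⟩ => ⟨ha, hb, of_decide_eq_false h⟩)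

theorem popPass_layeredList (start : ℕ) {sizes : List ℕ} (hpos : ∀ s ∈ sizes, 0 < s) :
    popPass (layeredList start sizes) = range' (start + 1) sizes.sum := by
  induction sizes generalizing start with
  | nil => rfl
  | cons s sizes ih =>
    obtain ⟨k, rfl⟩ := Nat.exists_eq_add_one.mpr (hpos _ mem_cons_self)
    have hdec : (range' (start + 1) (k + 1)).reverse.IsChain (· > ·) :=
      isChain_reverse.mpr ((isChain_range' _ _ 1).imp fun _ _ h => by omega)
    rw [layeredList_cons, popPass_append_of_isChain _ (by simp) hdec, reverse_reverse,
      ih _ fun t ht => hpos t (mem_cons_of_mem _ ht), sum_cons, Nat.add_right_comm,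
      range'_append_1]
    intro y hy
    have := lt_of_mem_layeredList (mem_of_mem_head? hy)
    rw [getLast_reverse, head_range']
    omega

theorem flatten_eq_layeredList_of_flatMap_reverse {L : List (List ℕ)} {start m : ℕ}
    (h : L.flatMap reverse = range' (start + 1) m) :
    L.flatten = layeredList start (L.map length) := by
  induction L generalizing start m with
  | nil => rfl
  | cons b L ih =>
    have hlen : b.length + (L.flatMap reverse).length = m := by
      simpa using congrArg length h
    rw [flatMap_cons, ← hlen, ← range'_append_1] at h
    obtain ⟨hb, hL⟩ := append_inj h (by simp)
    rw [Nat.add_right_comm] at hL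
    rw [flatten_cons, map_cons, layeredList_cons, ← hb, reverse_reverse, ih hL]

theorem one_pass_sortable_iff_layered_general (n : ℕ) (π : List ℕ) :
    popPass π = idList n ↔
      ∃ sizes : List ℕ, (∀ s ∈ sizes, 0 < s) ∧ sizes.sum = n ∧ π = layeredList 0 sizes := by
  rw [idList_eq_range']
  constructor
  · intro h
    rw [popPass_eq_flatMap_reverse] at h
    refine ⟨(decreasingRuns π).map length, ?_, by simpa using congrArg length h, ?_⟩
    · simp only [mem_map]
      rintro _ ⟨b, hb, rfl⟩
      exact length_pos_of_ne_nil (ne_nil_of_mem_splitBy hb)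
    · rw [← flatten_eq_layeredList_of_flatMap_reverse h]
      exact (flatten_splitBy _ π).symm
  · rintro ⟨sizes, hpos, rfl, rfl⟩
    exact popPass_layeredList 0 hpos

/-- A permutation of `[n]` is sorted by one pop-stack pass iff it is layered,
i.e. a direct sum of decreasing permutations. -/
theorem one_pass_sortable_iff_layered (n : ℕ) (π : List ℕ) (h : IsPermOf π n) :
    popPass π = idList n ↔
      ∃ sizes : List ℕ, (∀ s ∈ sizes, 0 < s) ∧ sizes.sum = n ∧ π = layeredList 0 sizes :=
  one_pass_sortable_iff_layered_general n π
end

section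
/- For every permutation σ of [n], every maximal decreasing run of P(σ) has length at most 3. Equivalently, P(σ) contains no four consecutive entries in decreasing order. -/
/-! A pass of the pop-stack writes out the stack contents as blocks increasing from left to
right, and the stack is popped only when the incoming entry is at least its top; so the first
entry of each block is at most the last entry of the next block (`PopBlocks`). Descents thus
occur only between blocks, and three consecutive descents would need two consecutive singleton
blocks `[y]`, `[z]` with `z < y`, contradicting `y ≤ z`. -/

section Blocks

variable {α : Type*} [Preorder α]

def PopBlocks (L : List (List α)) : Prop :=
  (∀ b ∈ L, b ≠ []) ∧ (∀ b ∈ L, b.IsChain (· < ·)) ∧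
    L.IsChain (fun u v => ∀ x ∈ u.head?, ∀ y ∈ v.getLast?, x ≤ y)

theorem PopBlocks.singleton {b : List α} (hb : b ≠ []) (hc : b.IsChain (· < ·)) :
    PopBlocks [b] :=
  ⟨by simpa using hb, by simpa using hc, List.isChain_singleton _⟩

theorem PopBlocks.cons {b c : List α} {L : List (List α)} (h : PopBlocks (c :: L))
    (hb : b ≠ []) (hc : b.IsChain (· < ·))
    (hbc : ∀ x ∈ b.head?, ∀ y ∈ c.getLast?, x ≤ y) : PopBlocks (b :: c :: L) := by
  obtain ⟨hne, hinc, hlink⟩ := h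
  refine ⟨?_, ?_, List.isChain_cons_cons.mpr ⟨hbc, hlink⟩⟩ <;> rintro d (_ | ⟨_, hd⟩)
  exacts [hb, hne d hd, hc, hinc d hd]

theorem PopBlocks.of_cons {b : List α} {L : List (List α)} (h : PopBlocks (b :: L)) :
    PopBlocks L :=
  ⟨fun c hc => h.1 c (.tail _ hc), fun c hc => h.2.1 c (.tail _ hc), h.2.2.tail⟩

theorem PopBlocks.not_three_decreasing_head {L : List (List α)} (hL : PopBlocks L)
    {a b c : α} {t : List α} (ht : L.flatten = a :: b :: c :: t) : ¬(c < b ∧ b < a) := by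
  rintro ⟨hcb, hba⟩
  obtain ⟨hne, hinc, hlink⟩ := hL
  rcases L with _ | ⟨_ | ⟨x, _ | ⟨y, u⟩⟩, L⟩
  · simp at ht
  · exact hne [] (by simp) rfl
  · rcases L with _ | ⟨_ | ⟨y, _ | ⟨z, v⟩⟩, L⟩
    · simp at ht
    · exact hne [] (by simp) rfl
    · obtain ⟨rfl, rfl, -⟩ : x = a ∧ y = b ∧ _ := by simpa using ht
      have hxy : x ≤ y := by simpa using (List.isChain_cons_cons.mp hlink).1
      exact (hba.trans_le hxy).false
    · obtain ⟨rfl, rfl, rfl, -⟩ : x = a ∧ y = b ∧ z = c ∧ _ := by simpa using ht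
      exact lt_asymm hcb (List.isChain_cons_cons.mp (hinc (y :: z :: v) (by simp))).1
  · obtain ⟨rfl, rfl, -⟩ : x = a ∧ y = b ∧ _ := by simpa using ht
    exact lt_asymm hba (List.isChain_cons_cons.mp (hinc (x :: y :: u) (by simp))).1

theorem PopBlocks.not_four_decreasing {L : List (List α)} (hL : PopBlocks L) (i : ℕ)
    {a b c d : α} {t : List α} (ht : L.flatten.drop i = a :: b :: c :: d :: t) :
    ¬(d < c ∧ c < b ∧ b < a) := by
  rintro ⟨hdc, hcb, hba⟩
  induction L generalizing i with
  | nil => simp at ht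
  | cons u L ih =>
    rw [List.flatten_cons, List.drop_append] at ht
    rcases hu : u.drop i with _ | ⟨x, _ | ⟨y, r⟩⟩
    · rw [hu, List.nil_append] at ht
      exact ih hL.of_cons _ ht
    · have hi : i - u.length = 0 := by
        have := congrArg List.length hu
        simp only [List.length_drop, List.length_singleton] at this
        omega
      rw [hu, hi, List.drop_zero, List.singleton_append] at ht
      exact hL.of_cons.not_three_decreasing_head (List.cons_eq_cons.mp ht).2 ⟨hdc, hcb⟩
    · obtain ⟨rfl, rfl, -⟩ : x = a ∧ y = b ∧ _ := by simpa [hu] using ht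
      have hxy := (hL.2.1 u (by simp)).drop i
      rw [hu] at hxy
      exact lt_asymm hba (List.isChain_cons_cons.mp hxy).1

end Blocks

theorem popAux_eq_flatten (xs : List ℕ) {s : List ℕ} (hs : s ≠ []) (hc : s.IsChain (· < ·)) :
    ∃ b L, PopBlocks (b :: L) ∧ popAux s xs = (b :: L).flatten ∧ b.getLast? = s.getLast? := by
  induction xs generalizing s with
  | nil => exact ⟨s, [], .singleton hs hc, by simp [popAux], rfl⟩
  | cons x xs ih =>
    obtain ⟨a, t, rfl⟩ := List.exists_cons_of_ne_nil hs
    by_cases hxa : x < a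
    · obtain ⟨b, L, hL, hpop, hlast⟩ := ih (List.cons_ne_nil x _) (hc.cons (by simpa using hxa))
      refine ⟨b, L, hL, by simpa [popAux, hxa] using hpop, by simp [hlast]⟩
    · obtain ⟨b, L, hL, hpop, hlast⟩ := ih (List.cons_ne_nil x []) (List.isChain_singleton x)
      refine ⟨a :: t, b :: L, hL.cons hs hc ?_, by simp [popAux, hxa, hpop], by simp⟩
      simpa [hlast] using le_of_not_gt hxa

theorem exists_popBlocks_popPass (l : List ℕ) : ∃ L, PopBlocks L ∧ popPass l = L.flatten := by
  cases l with
  | nil => exact ⟨[], ⟨by simp, by simp, .nil⟩, rfl⟩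
  | cons x xs =>
    obtain ⟨b, L, hL, hpop, -⟩ :=
      popAux_eq_flatten xs (List.cons_ne_nil x []) (List.isChain_singleton x)
    exact ⟨b :: L, hL, by simpa [popPass, popAux] using hpop⟩

theorem popPass_no_four_decreasing_general (σ : List ℕ) (i : ℕ)
    (hi : i + 3 < (popPass σ).length) :
    ¬((popPass σ).getD (i + 3) 0 < (popPass σ).getD (i + 2) 0 ∧
      (popPass σ).getD (i + 2) 0 < (popPass σ).getD (i + 1) 0 ∧
      (popPass σ).getD (i + 1) 0 < (popPass σ).getD i 0) := by
  obtain ⟨L, hL, hpop⟩ := exists_popBlocks_popPass σ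
  rw [hpop] at hi ⊢
  have hwindow : L.flatten.drop i = L.flatten[i] :: L.flatten[i + 1] ::
      L.flatten[i + 2] :: L.flatten[i + 3] :: L.flatten.drop (i + 4) := by
    rw [List.drop_eq_getElem_cons, List.drop_eq_getElem_cons, List.drop_eq_getElem_cons,
      List.drop_eq_getElem_cons]
  simp only [List.getD_eq_getElem _ _ hi,
    List.getD_eq_getElem _ _ (by omega : i + 2 < L.flatten.length),
    List.getD_eq_getElem _ _ (by omega : i + 1 < L.flatten.length),
    List.getD_eq_getElem _ _ (by omega : i < L.flatten.length)]
  exact hL.not_four_decreasing i hwindow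

/-- For every permutation `σ` of `[n]`, every maximal decreasing run of `P(σ)` has
length at most `3`; equivalently, `P(σ)` has no four consecutive entries in
decreasing order. -/
theorem popPass_no_four_decreasing (n : ℕ) (σ : List ℕ) (h : IsPermOf σ n)
    (i : ℕ) (hi : i + 3 < (popPass σ).length) :
    ¬((popPass σ).getD (i + 3) 0 < (popPass σ).getD (i + 2) 0 ∧
      (popPass σ).getD (i + 2) 0 < (popPass σ).getD (i + 1) 0 ∧
      (popPass σ).getD (i + 1) 0 < (popPass σ).getD i 0) :=
  popPass_no_four_decreasing_general σ i hi
end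

section
/- For any fixed k ≥ 1, the map sending a k-pop-stack-sortable permutation π of [n] to the tuple (w(π), w(P(π)), …, w(P^{k-1}(π))) of operation sequences is injective; i.e., a k-pop-stack-sortable permutation is uniquely determined by its sorting plan. -/
/-!
On a list without repeated adjacent entries, the ascents of `l` (the letters `a` of `w(l)`)
are exactly the boundaries between the maximal decreasing runs of `l`, and `P` reverses each
of these runs. Hence reversing `P(l)` blockwise along `w(l)` gives back `l`, so `P(l)` and
`w(l)` determine `l`. If `P^k π = P^k σ = id` and the sorting plans agree, a downward
induction on `i` then gives `P^i π = P^i σ` for every `i ≤ k`.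
-/

lemma revAux_nil (cur : List ℕ) (cs : List Bool) : revAux cur [] cs = cur := by
  cases cs <;> rfl

lemma revAux_append_replicate_false (l : List ℕ) : ∀ (cur rest : List ℕ) (cs : List Bool),
    revAux cur (l ++ rest) (List.replicate l.length false ++ cs) =
      revAux (l.reverse ++ cur) rest cs := by
  induction l with
  | nil => intro cur rest cs; simp
  | cons x l ih =>
    intro cur rest cs
    simpa [revAux, List.replicate_succ] using ih (x :: cur) rest cs

/-- Invariant of the pass: the stack `a :: s` is the current decreasing run, reversed. -/
lemma revAux_popAux_ascTail (xs : List ℕ) : ∀ (a : ℕ) (s cur : List ℕ),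
    (a :: xs).IsChain (· ≠ ·) →
    revAux cur (popAux (a :: s) xs)
        (true :: (List.replicate s.length false ++ ascTail (a :: xs))) =
      cur ++ (a :: s).reverse ++ xs := by
  induction xs with
  | nil =>
    intro a s cur _
    have := revAux_append_replicate_false s [a] [] [true]
    simp_all [popAux, ascTail, revAux]
  | cons x xs ih =>
    intro a s cur hc
    obtain ⟨hax, hc⟩ := List.isChain_cons_cons.mp hc
    rcases lt_or_gt_of_ne hax with hax | hxa
    · have hpop : popAux (a :: s) (x :: xs) = [a] ++ (s ++ popAux [x] xs) := by
        simp [popAux, hax.not_gt]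
      have hrest := ih x [] (s.reverse ++ [a]) hc
      simp only [List.length_nil, List.replicate_zero, List.nil_append] at hrest
      rw [hpop, ascTail, decide_eq_true hax]
      simp [revAux, revAux_append_replicate_false, hrest]
    · have hpush : popAux (a :: s) (x :: xs) = popAux (x :: a :: s) xs := by
        simp [popAux, hxa]
      have hword : List.replicate s.length false ++ decide (a < x) :: ascTail (x :: xs) =
          List.replicate (a :: s).length false ++ ascTail (x :: xs) := by
        simp [List.replicate_succ', hxa.not_gt]
      rw [hpush, ascTail, hword, ih x (a :: s) cur hc]
      simp

theorem rev_popPass_ascWord {l : List ℕ} (h : l.IsChain (· ≠ ·)) :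
    rev (popPass l) (ascWord l) = l := by
  cases l with
  | nil => rfl
  | cons x xs => simpa [rev, popPass, popAux, ascWord] using revAux_popAux_ascTail xs x [] [] h

theorem eq_of_popPass_eq_of_ascWord_eq {l l' : List ℕ}
    (h : l.IsChain (· ≠ ·)) (h' : l'.IsChain (· ≠ ·))
    (hP : popPass l = popPass l') (hw : ascWord l = ascWord l') : l = l' := by
  rw [← rev_popPass_ascWord h, ← rev_popPass_ascWord h', hP, hw]

lemma popAux_perm (l : List ℕ) : ∀ stack : List ℕ, (popAux stack l).Perm (stack ++ l) := by
  induction l with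
  | nil => intro stack; simp [popAux]
  | cons x xs ih =>
    rintro (_ | ⟨a, s⟩)
    · simpa [popAux] using ih [x]
    · rw [popAux]
      split
      · exact (ih (x :: a :: s)).trans
          ((List.Perm.swap a x _).trans (List.perm_middle.symm.cons a))
      · exact (List.Perm.append_left (a :: s) (ih [x])).trans (by simp)

lemma popPass_perm (l : List ℕ) : (popPass l).Perm l := by
  simpa [popPass] using popAux_perm l []

lemma iterate_popPass_perm (l : List ℕ) (i : ℕ) : (popPass^[i] l).Perm l := by
  induction i with
  | zero => rfl
  | succ i ih =>
    rw [Function.iterate_succ_apply']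
    exact (popPass_perm _).trans ih

lemma nodup_idList (n : ℕ) : (idList n).Nodup :=
  List.nodup_range.map fun _ _ h => Nat.succ_injective h

lemma isChain_ne_iterate_popPass {l : List ℕ} {n k : ℕ} (hl : popPass^[k] l = idList n)
    (i : ℕ) : (popPass^[i] l).IsChain (· ≠ ·) := by
  have hperm := (iterate_popPass_perm l i).trans (iterate_popPass_perm l k).symm
  rw [hl] at hperm
  exact (hperm.nodup_iff.mpr (nodup_idList n)).isChain

theorem sortingPlan_injective_general (n k : ℕ) (π σ : List ℕ)
    (hπs : popPass^[k] π = idList n) (hσs : popPass^[k] σ = idList n)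
    (hw : ∀ i < k, ascWord (popPass^[i] π) = ascWord (popPass^[i] σ)) :
    π = σ := by
  suffices ∀ i ≤ k, popPass^[i] π = popPass^[i] σ from this 0 k.zero_le
  refine fun i hi ↦ Nat.decreasingInduction
    (motive := fun j _ ↦ popPass^[j] π = popPass^[j] σ) ?_ (by rw [hπs, hσs]) hi
  intro i hik ih
  rw [Function.iterate_succ_apply', Function.iterate_succ_apply'] at ih
  exact eq_of_popPass_eq_of_ascWord_eq (isChain_ne_iterate_popPass hπs i)
    (isChain_ne_iterate_popPass hσs i) ih (hw i hik)

/-- A `k`-pop-stack-sortable permutation is uniquely determined by its sorting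
plan `(w(π), w(P(π)), …, w(P^(k-1)(π)))`. -/
theorem sortingPlan_injective (n k : ℕ) (hk : 1 ≤ k) (π σ : List ℕ)
    (hπ : IsPermOf π n) (hσ : IsPermOf σ n)
    (hπs : popPass^[k] π = idList n) (hσs : popPass^[k] σ = idList n)
    (hw : ∀ i < k, ascWord (popPass^[i] π) = ascWord (popPass^[i] σ)) :
    π = σ :=
  sortingPlan_injective_general n k π σ hπs hσs hw
end

section
/- In a semitrace, if two distinct values a and b of [n] are in descending order in the permutation α_i on some row i (the larger appearing before the smaller), then there exists a row j with i ≤ j ≤ k such that a and b lie in the same block of α_j with respect to μ_j. -/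
/-!
Suppose `a` and `b` are never in the same block on rows `i, …, k`. Then on each of these rows
they are separated by a bar, so the blockwise reversal keeps the larger one before the smaller
one. By induction this order survives down to row `k + 1`, which is the identity: impossible.
-/

theorem List.Pairwise.rel_of_idxOf_lt {α : Type*} [BEq α] [LawfulBEq α] {R : α → α → Prop}
    {l : List α} (hl : l.Pairwise R) {x y : α} (hx : x ∈ l) (hy : y ∈ l)
    (h : l.idxOf x < l.idxOf y) : R x y := by
  have hxy := List.pairwise_iff_getElem.1 hl _ _ (List.idxOf_lt_length_of_mem hx)
    (List.idxOf_lt_length_of_mem hy) h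
  rwa [List.getElem_idxOf, List.getElem_idxOf] at hxy

theorem List.idxOf_append_lt_idxOf_append {α : Type*} [BEq α] [LawfulBEq α] {l₁ l₂ : List α}
    {x y : α} (hx : x ∈ l₁) (hy : y ∉ l₁) : (l₁ ++ l₂).idxOf x < (l₁ ++ l₂).idxOf y := by
  rw [List.idxOf_append_of_mem hx, List.idxOf_append_of_notMem hy]
  exact (List.idxOf_lt_length_of_mem hx).trans_le (Nat.le_add_right _ _)

theorem pairwise_lt_idList (n : ℕ) : (idList n).Pairwise (· < ·) :=
  List.pairwise_map.2 (List.pairwise_lt_range.imp Nat.succ_lt_succ)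

theorem revAux_perm (cur l : List ℕ) (μ : List Bool) : (revAux cur l μ).Perm (cur ++ l) := by
  induction l generalizing cur μ with
  | nil => simp [revAux]
  | cons x xs ih =>
    rcases μ with _ | ⟨_ | _, cs⟩
    · exact (ih (x :: cur) []).trans List.perm_middle.symm
    · exact (ih (x :: cur) cs).trans List.perm_middle.symm
    · exact (ih [x] cs).append_left cur

theorem rev_perm (l : List ℕ) (μ : List Bool) : (rev l μ).Perm l :=
  revAux_perm [] l μ

theorem revAux_append {l₁ l₂ : List ℕ} {μ₁ μ₂ : List Bool} (h : l₁.length = μ₁.length)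
    (hμ₂ : μ₂.head? = some true) (cur : List ℕ) :
    revAux cur (l₁ ++ l₂) (μ₁ ++ μ₂) = revAux cur l₁ μ₁ ++ rev l₂ μ₂ := by
  induction l₁ generalizing μ₁ cur with
  | nil =>
    obtain rfl : μ₁ = [] := List.length_eq_zero_iff.1 h.symm
    obtain ⟨_, cs⟩ := μ₂
    · simp at hμ₂
    · obtain rfl : _ = true := by simpa using hμ₂
      cases l₂ <;> simp [rev, revAux]
  | cons x xs ih =>
    obtain ⟨c, cs, rfl⟩ := List.exists_cons_of_length_eq_add_one h.symm
    have h' : xs.length = cs.length := by simpa using h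
    cases c
    · exact ih h' (x :: cur)
    · simp only [List.cons_append, revAux, if_true, List.append_assoc, ih h' [x]]

theorem rev_eq_append_of_getD_eq_true {l : List ℕ} {μ : List Bool} {r : ℕ} (hr : r ≤ l.length)
    (hbar : μ.getD r false = true) :
    rev l μ = rev (l.take r) (μ.take r) ++ rev (l.drop r) (μ.drop r) := by
  have hrμ : r < μ.length := by
    by_contra! h
    simp [List.getElem?_eq_none h] at hbar
  have hhead : (μ.drop r).head? = some true := by
    rw [List.head?_drop, List.getElem?_eq_getElem hrμ, ← List.getD_eq_getElem _ false hrμ, hbar]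
  have hlen : (l.take r).length = (μ.take r).length := by
    simp only [List.length_take]; omega
  conv_lhs => rw [← List.take_append_drop r l, ← List.take_append_drop r μ]
  exact revAux_append hlen hhead []

theorem idxOf_rev_lt_of_getD_eq_true {l : List ℕ} {μ : List Bool} {x y r : ℕ} (hx : x ∈ l)
    (hy : y ∈ l) (hxr : l.idxOf x < r) (hry : r ≤ l.idxOf y) (hbar : μ.getD r false = true) :
    (rev l μ).idxOf x < (rev l μ).idxOf y := by
  have hr : r ≤ l.length := hry.trans (List.idxOf_lt_length_of_mem hy).le
  have hx' : x ∈ rev (l.take r) (μ.take r) :=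
    (rev_perm _ _).mem_iff.2 ((List.mem_take_iff_idxOf_lt hx).2 hxr)
  have hy' : y ∉ rev (l.take r) (μ.take r) := fun h =>
    (((List.mem_take_iff_idxOf_lt hy).1 ((rev_perm _ _).mem_iff.1 h)).trans_le hry).false
  rw [rev_eq_append_of_getD_eq_true hr hbar]
  exact List.idxOf_append_lt_idxOf_append hx' hy'

theorem SameBlock.symm {σ : List ℕ} {μ : List Bool} {a b : ℕ} (h : SameBlock σ μ a b) :
    SameBlock σ μ b a := by
  obtain ⟨p, q, hpq, hq, hval, hbar⟩ := h
  exact ⟨p, q, hpq, hq, hval.symm, hbar⟩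

theorem sameBlock_of_idxOf_le {σ : List ℕ} {μ : List Bool} {x y : ℕ} (hx : x ∈ σ) (hy : y ∈ σ)
    (hxy : σ.idxOf x ≤ σ.idxOf y)
    (hbar : ∀ r, σ.idxOf x < r → r ≤ σ.idxOf y → μ.getD r false = false) :
    SameBlock σ μ x y := by
  have hx' := List.idxOf_lt_length_of_mem hx
  have hy' := List.idxOf_lt_length_of_mem hy
  refine ⟨_, _, hxy, hy', Or.inl ⟨?_, ?_⟩, hbar⟩
  · rw [List.getD_eq_getElem _ _ hx', List.getElem_idxOf]
  · rw [List.getD_eq_getElem _ _ hy', List.getElem_idxOf]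

theorem idxOf_rev_lt_of_not_sameBlock {σ : List ℕ} {μ : List Bool} {x y : ℕ} (hx : x ∈ σ)
    (hy : y ∈ σ) (hxy : σ.idxOf x < σ.idxOf y) (hsep : ¬ SameBlock σ μ x y) :
    (rev σ μ).idxOf x < (rev σ μ).idxOf y := by
  obtain ⟨r, hxr, hry, hbar⟩ :
      ∃ r, σ.idxOf x < r ∧ r ≤ σ.idxOf y ∧ μ.getD r false = true := by
    contrapose! hsep
    exact sameBlock_of_idxOf_le hx hy hxy.le fun r h₁ h₂ => by simpa using hsep r h₁ h₂
  exact idxOf_rev_lt_of_getD_eq_true hx hy hxr hry hbar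

namespace IsSemitrace

variable {n k : ℕ} {α : ℕ → List ℕ} {μ : ℕ → List Bool}

theorem mem_iff (hT : IsSemitrace n k α μ) {i : ℕ} (hi1 : 1 ≤ i) (hik : i ≤ k + 1) {x : ℕ} :
    x ∈ α i ↔ x ∈ idList n :=
  (hT.1 i hi1 hik).mem_iff

theorem idxOf_lt_of_forall_not_sameBlock (hT : IsSemitrace n k α μ) {i : ℕ} (hi1 : 1 ≤ i)
    {x y : ℕ} (hx : x ∈ idList n) (hy : y ∈ idList n) (hxy : (α i).idxOf x < (α i).idxOf y)
    (hsep : ∀ j, i ≤ j → j ≤ k → ¬ SameBlock (α j) (μ j) x y) :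
    ∀ j, i ≤ j → j ≤ k + 1 → (α j).idxOf x < (α j).idxOf y := by
  intro j hij
  induction j, hij using Nat.le_induction with
  | base => exact fun _ => hxy
  | succ j hij ih =>
    intro hjk
    have hj1 : 1 ≤ j := hi1.trans hij
    rw [hT.2.2.2 j hj1 (by omega)]
    exact idxOf_rev_lt_of_not_sameBlock ((hT.mem_iff hj1 (by omega)).2 hx)
      ((hT.mem_iff hj1 (by omega)).2 hy) (ih (by omega)) (hsep j hij (by omega))

theorem exists_sameBlock_of_idxOf_lt (hT : IsSemitrace n k α μ) {i : ℕ} (hi1 : 1 ≤ i)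
    (hik : i ≤ k + 1) {x y : ℕ} (hx : x ∈ α i) (hy : y ∈ α i) (hyx : y < x)
    (hxy : (α i).idxOf x < (α i).idxOf y) : ∃ j, i ≤ j ∧ j ≤ k ∧ SameBlock (α j) (μ j) x y := by
  by_contra! hsep
  have hx' := (hT.mem_iff hi1 hik).1 hx
  have hy' := (hT.mem_iff hi1 hik).1 hy
  have hfinal := hT.idxOf_lt_of_forall_not_sameBlock hi1 hx' hy' hxy hsep (k + 1) hik le_rfl
  rw [hT.2.2.1] at hfinal
  exact (pairwise_lt_idList n).rel_of_idxOf_lt hx' hy' hfinal |>.asymm hyx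

end IsSemitrace

/-- If two distinct values are in descending order in row `i` of a semitrace
(the larger appearing before the smaller), then on some row `j` with
`i ≤ j ≤ k` they lie in the same block. -/
theorem descending_sameBlock (n k : ℕ) (α : ℕ → List ℕ) (μ : ℕ → List Bool)
    (hT : IsSemitrace n k α μ) (i : ℕ) (hi1 : 1 ≤ i) (hik : i ≤ k + 1)
    (a b : ℕ) (hab : a ≠ b) (ha : a ∈ α i) (hb : b ∈ α i)
    (hdesc : (α i).idxOf (max a b) < (α i).idxOf (min a b)) :
    ∃ j, i ≤ j ∧ j ≤ k ∧ SameBlock (α j) (μ j) a b := by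
  rcases hab.lt_or_gt with hlt | hgt
  · rw [max_eq_right hlt.le, min_eq_left hlt.le] at hdesc
    obtain ⟨j, hij, hjk, hblock⟩ := hT.exists_sameBlock_of_idxOf_lt hi1 hik hb ha hlt hdesc
    exact ⟨j, hij, hjk, hblock.symm⟩
  · rw [max_eq_left hgt.le, min_eq_right hgt.le] at hdesc
    exact hT.exists_sameBlock_of_idxOf_lt hi1 hik ha hb hgt hdesc
end

section
/- For every permutation π of [n], if π has m maximal decreasing runs, then P(π) has at most m − 1 descents. -/
def dcount : List ℕ → ℕ
  | x :: y :: rest => (if y < x then 1 else 0) + dcount (y :: rest)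
  | _ => 0

lemma descentCount_cons₂ (x y : ℕ) (l : List ℕ) :
    descentCount (x :: y :: l) = (if y < x then 1 else 0) + descentCount (y :: l) := by
  unfold descentCount
  simp only [List.length_cons, Nat.add_sub_cancel]
  rw [List.range_succ_eq_map, List.filter_cons, List.filter_map]
  have hp : ((fun i => decide ((x :: y :: l).getD (i + 1) 0 < (x :: y :: l).getD i 0)) ∘ Nat.succ)
      = (fun i => decide ((y :: l).getD (i + 1) 0 < (y :: l).getD i 0)) := by
    funext i
    cases i <;> simp [Function.comp]
  rw [hp]
  by_cases h : y < x <;> simp [h, Nat.add_comm]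

lemma descentCount_eq_dcount (l : List ℕ) : descentCount l = dcount l := by
  induction l with
  | nil => rfl
  | cons x l ih =>
    cases l with
    | nil => rfl
    | cons y rest =>
      rw [descentCount_cons₂, ih, dcount]

lemma dcount_append (a b : List ℕ) : dcount (a ++ b) ≤ dcount a + 1 + dcount b := by
  induction a with
  | nil =>
    simp only [List.nil_append]
    have : dcount ([] : List ℕ) = 0 := rfl
    omega
  | cons x as ih =>
    cases as with
    | nil =>
      cases b with
      | nil => simp [dcount]
      | cons y bs =>
        simp only [List.singleton_append, dcount]
        split <;> omega
    | cons y as' =>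
      simp only [List.cons_append, dcount, List.append_eq] at *
      split <;> omega

lemma dcount_of_chain' (l : List ℕ) (h : l.Chain' (· < ·)) : dcount l = 0 := by
  induction l with
  | nil => rfl
  | cons x l ih =>
    cases l with
    | nil => rfl
    | cons y rest =>
      simp only [List.Chain', List.isChain_cons_cons] at h
      rw [dcount, ih h.2, if_neg (not_lt.mpr h.1.le)]

lemma dcount_flatten_le : ∀ M : List (List ℕ),
    (∀ b ∈ M, b.Chain' (· < ·)) → dcount M.flatten ≤ M.length - 1 := by
  intro M
  induction M with
  | nil => intro _; simp [dcount]
  | cons b M' ih =>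
    intro hM
    have hb0 : dcount b = 0 := dcount_of_chain' b (hM b (by simp))
    cases M' with
    | nil => simpa using hb0.le
    | cons c rest =>
      have h1 := dcount_append b (c :: rest).flatten
      have h2 := ih (fun d hd => hM d (by simp [hd]))
      simp only [List.flatten_cons] at *
      simp only [List.length_cons] at *
      omega

lemma popAux_stack : ∀ (b s r : List ℕ), s ≠ [] →
    (∀ x ∈ b.head?, ∀ a ∈ s.head?, x < a) →
    b.Chain' (· > ·) →
    (∀ y ∈ r.head?, ∀ t ∈ (b.reverse ++ s).head?, t < y) →
    popAux s (b ++ r) = b.reverse ++ s ++ popAux [] r := by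
  intro b
  induction b with
  | nil =>
    intro s r hs _ _ hr
    simp only [List.nil_append, List.reverse_nil]
    cases r with
    | nil => simp [popAux]
    | cons y rt =>
      cases s with
      | nil => exact absurd rfl hs
      | cons a s' =>
        have hay : a < y := by
          have := hr y (by simp) a
          simp at this
          exact this
        show popAux (a :: s') (y :: rt) = (a :: s') ++ popAux [] (y :: rt)
        rw [popAux, popAux]
        simp [not_lt.mpr hay.le]
  | cons x bs ih =>
    intro s r hs hhead hb hr
    cases s with
    | nil => exact absurd rfl hs
    | cons a s' =>
      have hxa : x < a := by
        have := hhead x (by simp) a (by simp)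
        exact this
      show popAux (a :: s') (x :: (bs ++ r)) = (x :: bs).reverse ++ (a :: s') ++ popAux [] r
      rw [popAux]
      simp only [hxa, if_true]
      simp only [List.Chain', List.isChain_cons] at hb
      have := ih (x :: a :: s') r (by simp)
        (fun z hz w hw => by
          simp at hw; subst hw
          exact hb.1 z hz)
        hb.2
        (fun y hy t ht => by
          apply hr y hy t
          simpa [List.reverse_cons, List.append_assoc] using ht)
      rw [this]
      simp [List.reverse_cons, List.append_assoc]

lemma popAux_block (b r : List ℕ) (hb : b ≠ []) (hd : b.Chain' (· > ·))
    (hr : ∀ y ∈ r.head?, ∀ t ∈ b.getLast?, t < y) :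
    popAux [] (b ++ r) = b.reverse ++ popAux [] r := by
  cases b with
  | nil => exact absurd rfl hb
  | cons x bs =>
    show popAux [] (x :: (bs ++ r)) = (x :: bs).reverse ++ popAux [] r
    rw [popAux]
    simp only [List.Chain', List.isChain_cons] at hd
    have := popAux_stack bs [x] r (by simp)
      (fun z hz w hw => by simp at hw; subst hw; exact hd.1 z hz)
      hd.2
      (fun y hy t ht => by
        apply hr y hy t
        rw [← List.head?_reverse]
        simpa [List.reverse_cons] using ht)
    rw [this]
    simp [List.reverse_cons]

lemma popAux_flatten : ∀ L : List (List ℕ),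
    (∀ b ∈ L, b ≠ []) → (∀ b ∈ L, b.Chain' (· > ·)) →
    L.Chain' (fun b c => ∀ x ∈ b.getLast?, ∀ y ∈ c.head?, x < y) →
    popAux [] L.flatten = (L.map List.reverse).flatten := by
  intro L
  induction L with
  | nil => intro _ _ _; rfl
  | cons b L' ih =>
    intro hne hdec hch
    simp only [List.Chain', List.isChain_cons] at hch
    have hflat : ∀ y ∈ (L'.flatten).head?, ∀ t ∈ b.getLast?, t < y := by
      intro y hy t ht
      cases L' with
      | nil => simp at hy
      | cons c rest =>
        have hc : c ≠ [] := hne c (by simp)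
        have : (c ++ rest.flatten).head? = c.head? := by
          cases c with
          | nil => exact absurd rfl hc
          | cons u us => rfl
        rw [List.flatten_cons, this] at hy
        exact hch.1 c (by simp) t ht y hy
    rw [List.flatten_cons,
      popAux_block b L'.flatten (hne b (by simp)) (hdec b (by simp)) hflat,
      ih (fun c hc => hne c (by simp [hc])) (fun c hc => hdec c (by simp [hc])) hch.2]
    simp

/-- If `π` has `m` maximal decreasing runs, then `P(π)` has at most `m - 1`
descents. -/
theorem popPass_descents_le (n : ℕ) (π : List ℕ) (h : IsPermOf π n)
    (L : List (List ℕ)) (hL : RunDecomp π L) :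
    descentCount (popPass π) ≤ L.length - 1 := by
  obtain ⟨hflat, hne, hdec, hch⟩ := hL
  rw [hflat, popPass, popAux_flatten L hne hdec hch, descentCount_eq_dcount]
  have hmono : ∀ b ∈ L.map List.reverse, b.Chain' (· < ·) := by
    intro b hb
    rw [List.mem_map] at hb
    obtain ⟨c, hc, rfl⟩ := hb
    simp only [List.Chain', List.isChain_reverse]
    exact hdec c hc
  have := dcount_flatten_le (L.map List.reverse) hmono
  simpa using this
end
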